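/- Let 𝐅 = (F_a)_{a≤0} be an extended non-linearity and let U^P = Σ_{k∈ℕ^d} u_k X^k/k! be a jet taking values in the polynomials. Then there exists a unique jet U with polynomial part U^P satisfying the algebraic fixed point equation U = U^P + 𝓘_0[𝐅(U)]. -/

import Mathlib

open MeasureTheory
open scoped Classical

noncomputable section

namespace RS

inductive Typ : Type
  | Xi : Typ
  | In : Typ
deriving DecidableEq

/-- multi-indices `ℕ^d` -/
abbrev Nd (d : ℕ) := Fin d → ℕ

/-- edge types `ℰ = 𝔏 × ℕ^d` -/
abbrev ET (d : ℕ) := Typ × Nd d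

/-- Decorated rooted trees (with an extended decoration `a : ℝ` at each node),
in the symbolic representation `𝟏^a X^k Ξ_L ∏_{(m,τ) ∈ B} 𝓘_m[τ]`.
Trees of the reduced structure are those with all extended decorations zero. -/
inductive Tr (d : ℕ) : Type
  | node (a : ℝ) (k : Nd d) (L : List (Nd d)) (B : List (Nd d × Tr d)) : Tr d

namespace Tr

instance {d} : DecidableEq (Tr d) := Classical.decEq _

variable {d : ℕ}

/-- the tree product: join roots, add root decorations -/
def mul : Tr d → Tr d → Tr d
  | node a k L B, node a' k' L' B' => node (a + a') (k + k') (L ++ L') (B ++ B')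

/-- the unit tree `𝟏` -/
def one (d : ℕ) : Tr d := node 0 0 [] []

/-- `X^k` -/
def Xpow (k : Nd d) : Tr d := node 0 k [] []

/-- `Ξ_l` -/
def Xi (l : Nd d) : Tr d := node 0 0 [l] []

/-- `𝓘_m[τ]` -/
def plant (m : Nd d) (τ : Tr d) : Tr d := node 0 0 [] [(m, τ)]

/-- `𝟏^a` -/
def oneA {d : ℕ} (a : ℝ) : Tr d := node a 0 [] []

/-- the `𝔰`-degree of a multi-index -/
def degN (s : Fin d → ℝ) (k : Nd d) : ℝ := ∑ i, (k i : ℝ) * s i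

mutual
  /-- the degree `|τ|_𝔰` (ignoring extended decorations) -/
  def deg (s : Fin d → ℝ) (cXi cI : ℝ) : Tr d → ℝ
    | node _ k L B => degN s k + (L.map fun l => cXi - degN s l).sum + degB s cXi cI B
  def degB (s : Fin d → ℝ) (cXi cI : ℝ) : List (Nd d × Tr d) → ℝ
    | [] => 0
    | y :: ys => (deg s cXi cI y.2 + cI - degN s y.1) + degB s cXi cI ys
end

mutual
  /-- sum of all extended decorations of a tree -/
  def oSum : Tr d → ℝ
    | node a _ _ B => a + oSumB B
  def oSumB : List (Nd d × Tr d) → ℝ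
    | [] => 0
    | y :: ys => oSum y.2 + oSumB ys
end

/-- the degree `|τ|₊ = |τ|_𝔰 + Σ_x 𝔬(x)` -/
def degp (s : Fin d → ℝ) (cXi cI : ℝ) (τ : Tr d) : ℝ := deg s cXi cI τ + oSum τ

/-- trees all of whose extended decorations vanish (i.e. trees of the reduced structure) -/
inductive ZeroO : Tr d → Prop
  | node {k : Nd d} {L : List (Nd d)} {B : List (Nd d × Tr d)} :
      (∀ y ∈ B, ZeroO y.2) → ZeroO (node 0 k L B)

/-- the multiset `𝒩(τ)` of edge decorations at the root -/
def rootN : Tr d → Multiset (ET d)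
  | node _ _ L B =>
      (↑(L.map fun l => ((Typ.Xi, l) : ET d)) : Multiset (ET d)) +
      (↑(B.map fun y => ((Typ.In, y.1) : ET d)) : Multiset (ET d))

/-- the polynomial decoration at the root -/
def rootK : Tr d → Nd d
  | node _ k _ _ => k

/-- the extended decoration at the root -/
def rootO : Tr d → ℝ
  | node a _ _ _ => a

/-- planted trees: `𝟏^a Ξ_l` or `𝟏^a 𝓘_m[σ]` -/
def Planted : Tr d → Prop
  | node _ k L B => k = 0 ∧ L.length + B.length = 1

/-- a tree strongly conforms to a rule `R` if the multiset of outgoing edge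
decorations at every node belongs to `R` -/
inductive Conforms (R : Set (Multiset (ET d))) : Tr d → Prop
  | node {a : ℝ} {k : Nd d} {L : List (Nd d)} {B : List (Nd d × Tr d)} :
      rootN (node a k L B) ∈ R → (∀ y ∈ B, Conforms R y.2) →
      Conforms R (node a k L B)

end Tr

/-- a rule is normal if it is closed under sub-multisets -/
def Normal {d : ℕ} (R : Set (Multiset (ET d))) : Prop :=
  ∀ A B : Multiset (ET d), A ≤ B → B ∈ R → A ∈ R

/-- `reg(N) = Σ_{(𝔱,k) ∈ N} (reg(𝔱) - |k|_𝔰)` -/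
def regMS {d : ℕ} (s : Fin d → ℝ) (reg : Typ → ℝ) (N : Multiset (ET d)) : ℝ :=
  (N.map fun o => reg o.1 - Tr.degN s o.2).sum

/-- subcriticality of a rule: there is `reg : 𝔏 → ℝ` with `reg(Ξ) < |Ξ|_𝔰` and
`reg(𝓘) < |𝓘|_𝔰 + inf_{N ∈ R} reg(N)` -/
def Subcritical {d : ℕ} (s : Fin d → ℝ) (cXi cI : ℝ) (R : Set (Multiset (ET d))) : Prop :=
  ∃ reg : Typ → ℝ, reg Typ.Xi < cXi ∧
    ∃ c : ℝ, (∀ N ∈ R, c ≤ regMS s reg N) ∧ reg Typ.In < cI + c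

/-- the set of strongly conforming trees of the reduced structure, `𝔗∘` -/
def Tcirc {d : ℕ} (R : Set (Multiset (ET d))) : Set (Tr d) :=
  {τ | Tr.ZeroO τ ∧ Tr.Conforms R τ}


/-- the factorial `k! = ∏ (k i)!` of a multi-index -/
def ndFact {d : ℕ} (k : Nd d) : ℕ := ∏ i, (k i).factorial

/-- the (finite, when `s i ≥ 1`) set `{k ∈ ℕ^d : |k|_𝔰 < c}` -/
def lowIdx {d : ℕ} (s : Fin d → ℝ) (c : ℝ) : Finset (Nd d) :=
  (Fintype.piFinset fun _ : Fin d => Finset.range (Nat.ceil (max c 0) + 1)).filter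
    fun k => Tr.degN s k < c


/-- non-linearities: functions `ℝ^ℰ → ℝ` -/
abbrev NLf (d : ℕ) := (ET d → ℝ) → ℝ

/-- a genuine non-linearity: smooth and depending on finitely many coordinates -/
def IsNonlin (F : NLf d) : Prop :=
  ∃ (S : Finset (ET d)) (f : ({o : ET d // o ∈ S} → ℝ) → ℝ), ContDiff ℝ (⊤ : ℕ∞) f ∧
    ∀ x : ET d → ℝ, F x = f fun o => x o.1

/-- the partial derivative `D_o` in the coordinate `o ∈ ℰ` -/
def Dedge (o : ET d) (F : NLf d) : NLf d :=
  fun x => deriv (fun t : ℝ => F (Function.update x o (x o + t))) 0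

/-- iterated partial derivatives `D_{o_1} ⋯ D_{o_n}` -/
def DList (os : List (ET d)) (F : NLf d) : NLf d := os.foldr Dedge F

/-- the `i`-th coordinate multi-index `e_i` -/
def eI (i : Fin d) : Nd d := Pi.single i 1

/-- the derivation `∂^{e_i} F = Σ_p 𝒴_{(𝓘,p+e_i)} D_{(𝓘,p)} F` -/
def paD (i : Fin d) (F : NLf d) : NLf d :=
  fun x => ∑ᶠ p : Nd d, x (Typ.In, p + eI i) * Dedge (Typ.In, p) F x

/-- the iterated derivation `∂^k` -/
def paPow (k : Nd d) (F : NLf d) : NLf d :=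
  (List.finRange d).foldr (fun i g => (paD i)^[k i] ∘ g) id F

mutual
  /-- the coherence map `Υ^𝐅` of an extended non-linearity `𝐅 = (F_a)_{a ≤ 0}`:
  `Υ^𝐅[𝟏^a X^k Ξ_L ∏_j 𝓘_{m_j}[τ_j]]
    = (∏_j Υ^𝐅[τ_j]) ⬝ (∂^k ∏_j D_{(𝓘,m_j)} ∏_{l∈L} D_{(Ξ,l)}) F_a` -/
  def Ups (Fam : ℝ → NLf d) : Tr d → NLf d
    | .node a k L B => fun x =>
        UpsB Fam B x *
          paPow k
            (DList ((B.map fun y => ((Typ.In, y.1) : ET d)) ++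
              L.map fun l => ((Typ.Xi, l) : ET d)) (Fam a)) x
  def UpsB (Fam : ℝ → NLf d) : List (Nd d × Tr d) → NLf d
    | [] => fun _ => 1
    | y :: ys => fun x => Ups Fam y.2 x * UpsB Fam ys x
end

/-- a jet `U = Σ_k u_k X^k/k! + Σ_τ u_τ τ/τ!`: a polynomial part and coefficients on
non-polynomial trees -/
structure Jet (d : ℕ) where
  p : Nd d → ℝ
  r : Tr d → ℝ
  poly : ∀ k : Nd d, r (Tr.Xpow k) = 0

/-- the point of `ℝ^ℰ` determined by the polynomial part of a jet -/
def Jet.toE (U : Jet d) : ET d → ℝ :=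
  fun o => match o.1 with
  | Typ.In => U.p o.2
  | Typ.Xi => 0

/-- `𝓘_0[τ]` -/
def plant0 (τ : Tr d) : Tr d := Tr.plant 0 τ

/-- the coefficient, on the basis tree `σ = 𝟏^a X^k Ξ_L ∏_j 𝓘_{m_j}[τ_j]` (relative to
`σ/σ!`), of the jet `𝐅(U) = Σ_{a ≤ 0} 𝓕_a(U) 𝟏^a`, where
`𝓕_a(U) = Σ_{α ∈ ℕ^ℰ} (D^α F_a(U^P, 0)/α!) (U - u, Ξ)^α` is the Taylor lift of `F_a`.
The sum runs over the ways the factors `(𝒟^qU - u_q 𝟏)` can contribute a polynomial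
`u_m X^{m-q}/(m-q)!` (recorded as a list `P` of pairs `(q, m)`) or a planted tree
`u_{𝓘[τ_j]} 𝓘_{m_j}[τ_j]/τ_j!`. -/
def liftNL (Fam : ℝ → NLf d) (U : Jet d) : Tr d → ℝ :=
  fun σ => match σ with
  | .node a k L B =>
      (ndFact k : ℝ) *
        ∑ᶠ P ∈ {P : List (Nd d × Nd d) |
            (∀ x ∈ P, x.1 ≤ x.2 ∧ x.1 ≠ x.2) ∧ (P.map fun x => x.2 - x.1).sum = k},
          (1 / (P.length.factorial : ℝ)) *
            DList ((P.map fun x => ((Typ.In, x.1) : ET d)) ++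
                (B.map fun y => ((Typ.In, y.1) : ET d)) ++
                L.map fun l => ((Typ.Xi, l) : ET d)) (Fam a) U.toE *
            (P.map fun x => U.p x.2 / (ndFact (x.2 - x.1) : ℝ)).prod *
            (B.map fun y => U.r (plant0 y.2)).prod

/-- the jet `U` solves the algebraic fixed point equation `U = U^P + 𝓘_0[𝐅(U)]` -/
def SolvesFP (Fam : ℝ → NLf d) (U : Jet d) : Prop :=
  (∀ σ : Tr d, U.r σ ≠ 0 → ∃ τ, σ = plant0 τ) ∧
  ∀ τ : Tr d, U.r (plant0 τ) = liftNL Fam U τ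

/-- the jet `U` is coherent with the extended non-linearity `𝐅`:
`U` is of the planted form and `u_{𝓘[τ]} = Υ^𝐅[τ](U^P, 0)` -/
def Coherent (Fam : ℝ → NLf d) (U : Jet d) : Prop :=
  (∀ σ : Tr d, U.r σ ≠ 0 → ∃ τ, σ = plant0 τ) ∧
  ∀ τ : Tr d, U.r (plant0 τ) = Ups Fam τ U.toE

/-- an extended non-linearity `(F_a)_{a ≤ 0}`: indexed by non-positive reals, finitely
many nonzero, each a genuine non-linearity -/
def IsExtNonlin (Fam : ℝ → NLf d) : Prop :=
  (∀ a : ℝ, 0 < a → Fam a = 0) ∧ {a : ℝ | Fam a ≠ 0}.Finite ∧ ∀ a, IsNonlin (Fam a)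

section AuxFP

variable {d : ℕ}

mutual
  /-- size of a tree -/
  def tsz : Tr d → ℕ
    | .node _ _ _ B => 1 + tszB B
  def tszB : List (Nd d × Tr d) → ℕ
    | [] => 0
    | y :: ys => tsz y.2 + tszB ys
end

lemma tsz_mem_le {B : List (Nd d × Tr d)} {y : Nd d × Tr d} (h : y ∈ B) :
    tsz y.2 ≤ tszB B := by
  induction B with
  | nil => simp at h
  | cons z zs ih =>
      rcases List.mem_cons.mp h with h | h
      · subst h; simp [tszB]
      · have := ih h; simp [tszB]; omega

/-- point of `ℝ^ℰ` from a polynomial part -/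
def toE0 (uP : Nd d → ℝ) : ET d → ℝ :=
  fun o => match o.1 with
  | Typ.In => uP o.2
  | Typ.Xi => 0

lemma toE_eq (U : Jet d) : U.toE = toE0 U.p := by
  funext o; rcases o with ⟨t, n⟩; cases t <;> rfl

mutual
  /-- the unique candidate coefficients for the fixed point -/
  def solCoef (Fam : ℝ → NLf d) (uP : Nd d → ℝ) : Tr d → ℝ
    | .node a k L B =>
        (ndFact k : ℝ) *
          ∑ᶠ P ∈ {P : List (Nd d × Nd d) |
              (∀ x ∈ P, x.1 ≤ x.2 ∧ x.1 ≠ x.2) ∧ (P.map fun x => x.2 - x.1).sum = k},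
            (1 / (P.length.factorial : ℝ)) *
              DList ((P.map fun x => ((Typ.In, x.1) : ET d)) ++
                  (B.map fun y => ((Typ.In, y.1) : ET d)) ++
                  L.map fun l => ((Typ.Xi, l) : ET d)) (Fam a) (toE0 uP) *
              (P.map fun x => uP x.2 / (ndFact (x.2 - x.1) : ℝ)).prod *
              solProd Fam uP B
  def solProd (Fam : ℝ → NLf d) (uP : Nd d → ℝ) : List (Nd d × Tr d) → ℝ
    | [] => 1
    | y :: ys => solCoef Fam uP y.2 * solProd Fam uP ys
end

lemma plant0_inj : Function.Injective (plant0 (d := d)) := by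
  intro a b h
  simpa [plant0, Tr.plant] using h

/-- the candidate coefficient function on all trees -/
def solR (Fam : ℝ → NLf d) (uP : Nd d → ℝ) (σ : Tr d) : ℝ :=
  if h : ∃ τ, σ = plant0 τ then solCoef Fam uP h.choose else 0

lemma solR_plant0 (Fam : ℝ → NLf d) (uP : Nd d → ℝ) (τ : Tr d) :
    solR Fam uP (plant0 τ) = solCoef Fam uP τ := by
  have h : ∃ τ', plant0 τ = plant0 τ' := ⟨τ, rfl⟩
  rw [solR, dif_pos h, show h.choose = τ from (plant0_inj h.choose_spec).symm]

lemma solProd_eq (Fam : ℝ → NLf d) (uP : Nd d → ℝ) (U : Jet d)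
    (B : List (Nd d × Tr d)) (h : ∀ y ∈ B, U.r (plant0 y.2) = solCoef Fam uP y.2) :
    (B.map fun y => U.r (plant0 y.2)).prod = solProd Fam uP B := by
  induction B with
  | nil => simp [solProd]
  | cons z zs ih =>
      simp only [List.map_cons, List.prod_cons, solProd]
      rw [h z List.mem_cons_self, ih fun y hy => h y (List.mem_cons_of_mem _ hy)]

lemma liftNL_eq_solCoef (Fam : ℝ → NLf d) (uP : Nd d → ℝ) (U : Jet d)
    (hp : U.p = uP) (τ : Tr d)
    (hr : ∀ σ : Tr d, tsz σ < tsz τ → U.r (plant0 σ) = solCoef Fam uP σ) :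
    liftNL Fam U τ = solCoef Fam uP τ := by
  rcases τ with ⟨a, k, L, B⟩
  have hB : ∀ y ∈ B, U.r (plant0 y.2) = solCoef Fam uP y.2 := by
    intro y hy
    exact hr y.2 (by have := tsz_mem_le hy; simp only [tsz]; omega)
  rw [liftNL, solCoef]
  congr 1
  refine finsum_mem_congr rfl fun P _ => ?_
  rw [toE_eq, hp, solProd_eq Fam uP U B hB]

lemma solves_unique (Fam : ℝ → NLf d) (uP : Nd d → ℝ) (U : Jet d)
    (hU : SolvesFP Fam U) (hp : U.p = uP) (τ : Tr d) :
    U.r (plant0 τ) = solCoef Fam uP τ := by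
  have key : ∀ n : ℕ, ∀ τ : Tr d, tsz τ ≤ n → U.r (plant0 τ) = solCoef Fam uP τ := by
    intro n
    induction n with
    | zero =>
        intro τ hτ
        rcases τ with ⟨a, k, L, B⟩
        simp [tsz] at hτ
    | succ n ih =>
        intro τ hτ
        rw [hU.2 τ]
        exact liftNL_eq_solCoef Fam uP U hp τ fun σ hσ => ih σ (by omega)
  exact key (tsz τ) τ le_rfl

end AuxFP

/-- For every extended non-linearity `𝐅` and polynomial jet
`U^P = Σ_k u_k X^k/k!` there is a unique jet `U` with polynomial part `U^P`
solving the algebraic fixed point equation `U = U^P + 𝓘_0[𝐅(U)]`. -/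
theorem algebraic_fixed_point
    (hd : 0 < d) (Fam : ℝ → NLf d) (hFam : IsExtNonlin Fam) (uP : Nd d → ℝ) :
    ∃! U : Jet d, U.p = uP ∧ SolvesFP Fam U := by
  classical
  have hpoly : ∀ k : Nd d, solR Fam uP (Tr.Xpow k) = 0 := by
    intro k
    rw [solR, dif_neg]
    rintro ⟨τ, h⟩
    simp [Tr.Xpow, plant0, Tr.plant] at h
  refine ⟨⟨uP, solR Fam uP, hpoly⟩, ⟨rfl, ?_, ?_⟩, ?_⟩
  · intro σ h
    by_contra hc
    exact h (dif_neg hc)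
  · intro τ
    show solR Fam uP (plant0 τ) = _
    rw [solR_plant0]
    exact (liftNL_eq_solCoef Fam uP ⟨uP, solR Fam uP, hpoly⟩ rfl τ
      fun σ _ => solR_plant0 Fam uP σ).symm
  · intro V hVb
    obtain ⟨hVp, hV⟩ := hVb
    have hr : V.r = solR Fam uP := by
      funext σ
      by_cases h : ∃ τ, σ = plant0 τ
      · rcases h with ⟨τ, rfl⟩
        rw [solR_plant0]
        exact solves_unique Fam uP V hV hVp τ
      · rw [solR, dif_neg h]
        by_contra hc
        exact h (hV.1 σ hc)
    cases V with
    | mk p r pol =>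
      simp only at hVp hr
      subst hVp
      subst hr
      rfl

end RS
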